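/- Let A_S be the Artin-Tits group of type E_8 with generators σ_1,…,σ_8, and let X = {s_1,…,s_7} (a standard parabolic subset of type E_7). Then the elements g = σ_1σ_3σ_4σ_5σ_6 and h = σ_2σ_4σ_5σ_6σ_7 are conjugate in A_S but are not conjugate in the standard parabolic subgroup A_X generated by {σ_1,…,σ_7}. In particular, A_X is not conjugacy stable in A_S. -/

import Mathlib

namespace ArtinTits

variable {B : Type*}

/-- The alternating product `a b a b ⋯` with `m` factors, starting with `a`. -/
def altProd {G : Type*} [Monoid G] (a b : G) : ℕ → G
  | 0 => 1
  | n + 1 => a * altProd b a n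

/-- The braid relations defining the Artin–Tits group of a Coxeter matrix:
`Π(σ_s, σ_t; m_{s,t}) = Π(σ_t, σ_s; m_{s,t})` whenever `m_{s,t} ≠ ∞` (here `∞` is coded by `0`). -/
def artinRelationsSet (M : CoxeterMatrix B) : Set (FreeGroup B) :=
  {r | ∃ s t : B, M s t ≠ 0 ∧
    r = altProd (FreeGroup.of s) (FreeGroup.of t) (M s t) *
        (altProd (FreeGroup.of t) (FreeGroup.of s) (M s t))⁻¹}

/-- The Artin–Tits group of a Coxeter matrix. -/
abbrev ArtinGroup (M : CoxeterMatrix B) : Type _ := PresentedGroup (artinRelationsSet M)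

/-- The standard generator `σ_s` of the Artin–Tits group. -/
def σ (M : CoxeterMatrix B) (s : B) : ArtinGroup M := PresentedGroup.of s

/-- The standard parabolic subgroup `A_X` of the Artin–Tits group. -/
def AP (M : CoxeterMatrix B) (X : Set B) : Subgroup (ArtinGroup M) :=
  Subgroup.closure (σ M '' X)

/-- The standard parabolic subgroup `W_X` of the Coxeter group. -/
def WP (M : CoxeterMatrix B) (X : Set B) : Subgroup M.Group :=
  Subgroup.closure (M.simple '' X)

/-- A subgroup `H ≤ G` is conjugacy stable if any two elements of `H` which are conjugate
in `G` are already conjugate by an element of `H`. -/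
def IsConjugacyStable {G : Type*} [Group G] (H : Subgroup G) : Prop :=
  ∀ a b : G, a ∈ H → b ∈ H → (∃ g : G, g⁻¹ * a * g = b) → ∃ h ∈ H, h⁻¹ * a * h = b

/-- Property `⋆_W` for the pair `(W_X, W_S)`. -/
def StarW (M : CoxeterMatrix B) (X : Set B) : Prop :=
  ∀ Y₁ Y₂ : Set B, Y₁ ⊆ X → Y₂ ⊆ X → ∀ w : M.Group,
    (fun x => w⁻¹ * x * w) '' (M.simple '' Y₁) = M.simple '' Y₂ →
    ∃ v ∈ WP M X, ∀ y ∈ Y₁, v⁻¹ * M.simple y * v = w⁻¹ * M.simple y * w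

/-- Property `⋆_A` for the pair `(A_X, A_S)`. -/
def StarA (M : CoxeterMatrix B) (X : Set B) : Prop :=
  ∀ Y₁ Y₂ : Set B, Y₁ ⊆ X → Y₂ ⊆ X → ∀ g : ArtinGroup M,
    (fun x => g⁻¹ * x * g) '' (σ M '' Y₁) = σ M '' Y₂ →
    ∃ h ∈ AP M X, ∀ y ∈ Y₁, h⁻¹ * σ M y * h = g⁻¹ * σ M y * g

/-- Adjacency in the Coxeter graph: `s` and `t` are joined by an edge iff `m_{s,t} ≥ 3`
(where the value `0` codes `∞`, which also gives an edge). -/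
def Adj (M : CoxeterMatrix B) (s t : B) : Prop := s ≠ t ∧ M s t ≠ 2

/-- `s` and `t` are connected by a path of the Coxeter graph staying inside `X`. -/
def ReachIn (M : CoxeterMatrix B) (X : Set B) (s t : B) : Prop :=
  Relation.ReflTransGen (fun a b => a ∈ X ∧ b ∈ X ∧ Adj M a b) s t

/-- The Coxeter graph induced on `X` is connected. -/
def ConnectedIn (M : CoxeterMatrix B) (X : Set B) : Prop :=
  ∀ s ∈ X, ∀ t ∈ X, ReachIn M X s t

/-- The Coxeter matrix `M` restricted to `X` is of the type of the Coxeter matrix `M'`,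
i.e. there is a bijection transporting one to the other. -/
def IsOfType {B' : Type*} (M : CoxeterMatrix B) (X : Set B) (M' : CoxeterMatrix B') : Prop :=
  ∃ e : X ≃ B', ∀ a b : X, M a.val b.val = M' (e a) (e b)

/-- The Coxeter matrix of type `Bₙ` with the paper's labelling: vertices `0, …, n-1`
(representing `s_1, …, s_n`), `m_{s_1, s_2} = 4` and `m_{s_i, s_{i+1}} = 3` for `i ≥ 2`. -/
def Bmat (n : ℕ) : CoxeterMatrix (Fin n) where
  M := Matrix.of fun i j : Fin n ↦
    if i = j then 1
      else (if (i.val = 0 ∧ j.val = 1) ∨ (j.val = 0 ∧ i.val = 1) then 4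
        else (if (j : ℕ) + 1 = i ∨ (i : ℕ) + 1 = j then 3 else 2))
  isSymm := by unfold Matrix.IsSymm; aesop
  diagonal := by simp
  off_diagonal := by aesop

/-- The Coxeter matrix of type `Dₙ` with the paper's labelling: vertices `0, …, n-1`
(representing `s_1, …, s_n`), with edges `{s_1, s_3}`, `{s_2, s_3}` and `{s_i, s_{i+1}}`
for `i ≥ 3`, all labelled `3`. -/
def Dmat (n : ℕ) : CoxeterMatrix (Fin n) where
  M := Matrix.of fun i j : Fin n ↦
    if i = j then 1
      else (if (i.val = 0 ∧ j.val = 2) ∨ (j.val = 0 ∧ i.val = 2) then 3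
        else (if i.val = 0 ∨ j.val = 0 then 2
          else (if (j : ℕ) + 1 = i ∨ (i : ℕ) + 1 = j then 3 else 2)))
  isSymm := by unfold Matrix.IsSymm; aesop
  diagonal := by simp
  off_diagonal := by aesop

end ArtinTits

/-!
Conjugation by `a k ⋯ a 1 a 0` shifts a braid chain `a 0, …, a k` one step up. Shifting twice along
the path `s₁ s₃ s₄ ⋯ s₈` turns `g` into `σ₃ σ₄ σ₅ σ₆ σ₇`, and shifting down along the path
`s₂ s₄ ⋯ s₈` turns that into `h`.

`A_S` acts on `𝔽₂⁸` through the reflection representation of `W(E₈)`, and `A_X` preserves the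
subspace `{v | v₈ = 0}`. The number of vectors of that subspace fixed by an element is therefore
invariant under conjugation in `A_X`, but it is `4` for `g` and `8` for `h`.
-/

namespace Module

variable {R V : Type*} [CommRing R] [AddCommGroup V] [Module R V] {x y : V} {f g : Dual R V}

lemma commute_reflection_of_eq_zero (hf : f x = 2) (hg : g y = 2) (hfy : f y = 0)
    (hgx : g x = 0) : Commute (reflection hf) (reflection hg) := by
  refine LinearEquiv.ext fun z ↦ ?_
  simp [reflection_apply, hfy, hgx, sub_right_comm]

lemma reflection_braid_of_eq_neg_one (hf : f x = 2) (hg : g y = 2) (hfy : f y = -1)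
    (hgx : g x = -1) :
    reflection hf * reflection hg * reflection hf =
      reflection hg * reflection hf * reflection hg := by
  ext z
  simp only [LinearEquiv.mul_apply, reflection_apply, map_sub, map_smul, hf, hg, hfy, hgx]
  module

end Module

lemma SemiconjBy.list_prod_map {G ι : Type*} [Monoid G] {c : G} {f g : ι → G} :
    ∀ {l : List ι}, (∀ i ∈ l, SemiconjBy c (f i) (g i)) →
      SemiconjBy c (l.map f).prod (l.map g).prod
  | [], _ => SemiconjBy.one_right c
  | i :: l, h => by
    simpa using (h i (by simp)).mul_right (list_prod_map fun j hj ↦ h j (by simp [hj]))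

open scoped Pointwise in
lemma MulAction.ncard_fixedBy_inter_conj {G α : Type*} [Group G] [MulAction G α] {W : Set α}
    {u : G} (hu : u ∈ stabilizer G W) (g : G) :
    (fixedBy α (u⁻¹ * g * u) ∩ W).ncard = (fixedBy α g ∩ W).ncard := by
  have hW : u⁻¹ • W = W := by rw [inv_smul_eq_iff, mem_stabilizer_iff.mp hu]
  rw [← Set.ncard_smul_set u⁻¹ (fixedBy α g ∩ W), Set.smul_set_inter, hW, smul_fixedBy, inv_inv]

namespace ArtinTits

variable {B : Type*}

section BraidChain

variable {G : Type*} [Monoid G]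

def descProd (a : ℕ → G) : ℕ → G
  | 0 => a 0
  | k + 1 => a (k + 1) * descProd a k

variable {a : ℕ → G}

lemma commute_descProd {j : ℕ} (hcomm : ∀ i, i + 2 ≤ j → Commute (a i) (a j)) :
    ∀ k, k + 2 ≤ j → Commute (descProd a k) (a j)
  | 0, hk => hcomm 0 hk
  | k + 1, hk => (hcomm (k + 1) hk).mul_left (commute_descProd hcomm k (by omega))

lemma semiconjBy_descProd {n : ℕ}
    (hbraid : ∀ i < n, a i * a (i + 1) * a i = a (i + 1) * a i * a (i + 1))
    (hcomm : ∀ i j, i + 2 ≤ j → j ≤ n → Commute (a i) (a j)) :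
    ∀ k ≤ n, ∀ i < k, SemiconjBy (descProd a k) (a (i + 1)) (a i)
  | 0, _, i, hi => absurd hi (Nat.not_lt_zero i)
  | k + 1, hk, i, hi => by
    rcases Nat.lt_succ_iff_lt_or_eq.mp hi with hi | rfl
    · exact ((hcomm i (k + 1) (by omega) hk).symm.semiconjBy).mul_left
        (semiconjBy_descProd hbraid hcomm k (by omega) i hi)
    · show a (i + 1) * descProd a i * a (i + 1) = a i * (a (i + 1) * descProd a i)
      cases i with
      | zero => simp only [descProd, ← mul_assoc, hbraid 0 (by omega)]
      | succ j =>
        have hD : Commute (descProd a j) (a (j + 2)) :=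
          commute_descProd (fun i hi ↦ hcomm i (j + 2) hi (by omega)) j le_rfl
        simp only [descProd, mul_assoc, hD.eq]
        simp only [← mul_assoc, hbraid (j + 1) (by omega)]

end BraidChain

section Relations

variable {M : CoxeterMatrix B}

lemma map_altProd {G H : Type*} [Monoid G] [Monoid H] (f : G →* H) (a b : G) :
    ∀ n, f (altProd a b n) = altProd (f a) (f b) n
  | 0 => map_one f
  | n + 1 => by rw [altProd, map_mul, map_altProd f b a n, altProd]

lemma altProd_two {G : Type*} [Monoid G] (a b : G) : altProd a b 2 = a * b := by
  simp [altProd]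

lemma altProd_three {G : Type*} [Monoid G] (a b : G) : altProd a b 3 = a * b * a := by
  simp [altProd, mul_assoc]

lemma altProd_σ {s t : B} (h : M s t ≠ 0) :
    altProd (σ M s) (σ M t) (M s t) = altProd (σ M t) (σ M s) (M s t) := by
  have hrel : PresentedGroup.mk (artinRelationsSet M)
      (altProd (.of s) (.of t) (M s t) * (altProd (.of t) (.of s) (M s t))⁻¹) = 1 :=
    (QuotientGroup.eq_one_iff _).mpr (Subgroup.subset_normalClosure ⟨s, t, h, rfl⟩)
  rwa [map_mul, map_inv, mul_inv_eq_one, map_altProd, map_altProd] at hrel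

lemma σ_braid {s t : B} (h : M s t = 3) : σ M s * σ M t * σ M s = σ M t * σ M s * σ M t := by
  simpa [h, altProd_three] using altProd_σ (M := M) (s := s) (t := t) (by omega)

lemma commute_σ {s t : B} (h : M s t = 2) : Commute (σ M s) (σ M t) :=
  show σ M s * σ M t = σ M t * σ M s by
    simpa [h, altProd_two] using altProd_σ (M := M) (s := s) (t := t) (by omega)

lemma semiconjBy_descProd_σ_list_prod {v : ℕ → B} {n k j m : ℕ}
    (hadj : ∀ i < n, M (v i) (v (i + 1)) = 3)
    (hfar : ∀ i j, i + 2 ≤ j → j ≤ n → M (v i) (v j) = 2) (hk : k ≤ n) (hm : j + m ≤ k) :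
    SemiconjBy (descProd (σ M ∘ v) k) ((List.range m).map fun i ↦ σ M (v (j + i + 1))).prod
      ((List.range m).map fun i ↦ σ M (v (j + i))).prod :=
  SemiconjBy.list_prod_map fun i hi ↦
    semiconjBy_descProd (a := σ M ∘ v) (fun i hi ↦ σ_braid (hadj i hi))
      (fun i j hij hj ↦ commute_σ (hfar i j hij hj)) k hk (j + i)
      (by have := List.mem_range.mp hi; omega)

lemma σ_mem_AP {X : Set B} {s : B} (hs : s ∈ X) : σ M s ∈ AP M X :=
  Subgroup.subset_closure ⟨s, hs, rfl⟩

end Relations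

section ReflectionRepresentation

variable [Fintype B] [DecidableEq B] (M : CoxeterMatrix B) (R : Type*) [CommRing R]

/-- Entries with `M s t ∉ {1, 2, 3}` are sent to `0`: this is the Cartan matrix of `M` only when
`M` is simply laced. -/
def cartan : Matrix B B R :=
  Matrix.of fun s t ↦ if s = t then 2 else if M s t = 3 then -1 else 0

def simpleCoroot (s : B) : Module.Dual R (B → R) :=
  LinearMap.proj s ∘ₗ (cartan M R).mulVecLin

lemma simpleCoroot_single (s t : B) : simpleCoroot M R s (Pi.single t 1) = cartan M R s t := by
  simp [simpleCoroot]

def simpleReflection (s : B) : (B → R) ≃ₗ[R] (B → R) :=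
  Module.reflection (f := simpleCoroot M R s) (x := Pi.single s 1)
    (by simp [simpleCoroot_single, cartan])

variable {M R}

lemma simpleReflection_apply_of_ne {s t : B} (h : t ≠ s) (v : B → R) :
    simpleReflection M R s v t = v t := by
  simp [simpleReflection, Module.reflection_apply, h]

lemma simpleReflection_altProd (hM : ∀ s t, M s t ≤ 3) (s t : B) :
    altProd (simpleReflection M R s) (simpleReflection M R t) (M s t) =
      altProd (simpleReflection M R t) (simpleReflection M R s) (M s t) := by
  rcases eq_or_ne s t with rfl | hst
  · rfl
  have hne := M.off_diagonal s t hst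
  have hts : M t s = M s t := M.symmetric t s
  obtain h | h | h : M s t = 0 ∨ M s t = 2 ∨ M s t = 3 := by have := hM s t; omega
  · rw [h]; rfl
  · rw [h, altProd_two, altProd_two]
    exact (Module.commute_reflection_of_eq_zero _ _
      (by simp [simpleCoroot_single, cartan, hst, h])
      (by simp [simpleCoroot_single, cartan, hst.symm, hts, h])).eq
  · rw [h, altProd_three, altProd_three]
    exact Module.reflection_braid_of_eq_neg_one _ _
      (by simp [simpleCoroot_single, cartan, hst, h])
      (by simp [simpleCoroot_single, cartan, hst.symm, hts, h])

variable (R) in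
def reflectionRep (hM : ∀ s t, M s t ≤ 3) : ArtinGroup M →* ((B → R) ≃ₗ[R] (B → R)) :=
  PresentedGroup.toGroup (f := simpleReflection M R) <| by
    rintro _ ⟨s, t, -, rfl⟩
    rw [map_mul, map_inv, mul_inv_eq_one, map_altProd, map_altProd, FreeGroup.lift_apply_of,
      FreeGroup.lift_apply_of]
    exact simpleReflection_altProd hM s t

lemma reflectionRep_σ (hM : ∀ s t, M s t ≤ 3) (s : B) :
    reflectionRep R hM (σ M s) = simpleReflection M R s :=
  PresentedGroup.toGroup.of _

open scoped Pointwise in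
lemma AP_le_comap_stabilizer (hM : ∀ s t, M s t ≤ 3) (X : Set B) :
    AP M X ≤ (MulAction.stabilizer ((B → R) ≃ₗ[R] (B → R))
      {v : B → R | ∀ t ∉ X, v t = 0}).comap (reflectionRep R hM) := by
  refine (Subgroup.closure_le _).mpr ?_
  rintro _ ⟨s, hs, rfl⟩
  simp only [SetLike.mem_coe, Subgroup.mem_comap, MulAction.mem_stabilizer_set, reflectionRep_σ,
    Set.mem_ofPred_eq, LinearEquiv.smul_def]
  exact fun v ↦ forall₂_congr fun t ht ↦ by
    rw [simpleReflection_apply_of_ne (ne_of_mem_of_not_mem hs ht).symm]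

end ReflectionRepresentation

open CoxeterMatrix

section E₈

lemma E₈_le_three (s t : Fin 8) : E₈ s t ≤ 3 := by
  fin_cases s <;> fin_cases t <;> decide

/-- The path `s₁ - s₃ - s₄ - ⋯ - s₈` of the `E₈` diagram; vertex `i` stands for `s_{i+1}`. -/
def chain₁ (i : ℕ) : Fin 8 := [0, 2, 3, 4, 5, 6, 7].getD i 0

def chain₂ (i : ℕ) : Fin 8 := [1, 3, 4, 5, 6, 7].getD i 0

lemma exists_conj_E₈ : ∃ c : ArtinGroup E₈,
    c⁻¹ * (σ E₈ 0 * σ E₈ 2 * σ E₈ 3 * σ E₈ 4 * σ E₈ 5) * c =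
      σ E₈ 1 * σ E₈ 3 * σ E₈ 4 * σ E₈ 5 * σ E₈ 6 := by
  have hadj₁ : ∀ i < 6, E₈ (chain₁ i) (chain₁ (i + 1)) = 3 := by decide
  have hfar₁ : ∀ i j, i + 2 ≤ j → j ≤ 6 → E₈ (chain₁ i) (chain₁ j) = 2 := by
    have : ∀ j < 7, ∀ i < j - 1, E₈ (chain₁ i) (chain₁ j) = 2 := by decide
    exact fun i j hij hj ↦ this j (by omega) i (by omega)
  have hadj₂ : ∀ i < 5, E₈ (chain₂ i) (chain₂ (i + 1)) = 3 := by decide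
  have hfar₂ : ∀ i j, i + 2 ≤ j → j ≤ 5 → E₈ (chain₂ i) (chain₂ j) = 2 := by
    have : ∀ j < 6, ∀ i < j - 1, E₈ (chain₂ i) (chain₂ j) = 2 := by decide
    exact fun i j hij hj ↦ this j (by omega) i (by omega)
  have h₁ : SemiconjBy (descProd (σ E₈ ∘ chain₁) 5)
      (σ E₈ 2 * σ E₈ 3 * σ E₈ 4 * σ E₈ 5 * σ E₈ 6)
      (σ E₈ 0 * σ E₈ 2 * σ E₈ 3 * σ E₈ 4 * σ E₈ 5) := by
    simpa [List.range_succ, chain₁, mul_assoc] using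
      semiconjBy_descProd_σ_list_prod hadj₁ hfar₁ (k := 5) (j := 0) (m := 5) (by norm_num) le_rfl
  have h₂ : SemiconjBy (descProd (σ E₈ ∘ chain₁) 6)
      (σ E₈ 3 * σ E₈ 4 * σ E₈ 5 * σ E₈ 6 * σ E₈ 7)
      (σ E₈ 2 * σ E₈ 3 * σ E₈ 4 * σ E₈ 5 * σ E₈ 6) := by
    simpa [List.range_succ, chain₁, mul_assoc] using
      semiconjBy_descProd_σ_list_prod hadj₁ hfar₁ (k := 6) (j := 1) (m := 5) le_rfl le_rfl
  have h₃ : SemiconjBy (descProd (σ E₈ ∘ chain₂) 5)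
      (σ E₈ 3 * σ E₈ 4 * σ E₈ 5 * σ E₈ 6 * σ E₈ 7)
      (σ E₈ 1 * σ E₈ 3 * σ E₈ 4 * σ E₈ 5 * σ E₈ 6) := by
    simpa [List.range_succ, chain₂, mul_assoc] using
      semiconjBy_descProd_σ_list_prod hadj₂ hfar₂ (k := 5) (j := 0) (m := 5) le_rfl le_rfl
  exact ⟨_, by rw [mul_assoc, ← ((h₁.mul_left h₂).mul_left h₃.inv_symm_left).eq,
    inv_mul_cancel_left]⟩

lemma fixedBy_inter_E₇_eq (e : (Fin 8 → ZMod 2) ≃ₗ[ZMod 2] (Fin 8 → ZMod 2)) :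
    MulAction.fixedBy (Fin 8 → ZMod 2) e ∩
        {v | ∀ t ∉ ({0, 1, 2, 3, 4, 5, 6} : Set (Fin 8)), v t = 0} =
      ↑(Finset.univ.filter fun v ↦ e v = v ∧ v 7 = 0) := by
  ext v
  simp only [Set.mem_inter_iff, MulAction.mem_fixedBy, LinearEquiv.smul_def, Set.mem_ofPred_eq,
    Finset.coe_filter, Finset.mem_univ, true_and]
  refine and_congr_right fun _ ↦ ⟨fun h ↦ h 7 (by simp), fun h t ht ↦ ?_⟩
  fin_cases t <;> simp_all

lemma not_exists_conj_AP_E₇ : ¬ ∃ c ∈ AP E₈ ({0, 1, 2, 3, 4, 5, 6} : Set (Fin 8)),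
    c⁻¹ * (σ E₈ 0 * σ E₈ 2 * σ E₈ 3 * σ E₈ 4 * σ E₈ 5) * c =
      σ E₈ 1 * σ E₈ 3 * σ E₈ 4 * σ E₈ 5 * σ E₈ 6 := by
  rintro ⟨c, hc, hconj⟩
  have key := MulAction.ncard_fixedBy_inter_conj (AP_le_comap_stabilizer E₈_le_three _ hc)
    (reflectionRep (ZMod 2) E₈_le_three (σ E₈ 0 * σ E₈ 2 * σ E₈ 3 * σ E₈ 4 * σ E₈ 5))
  rw [← map_inv, ← map_mul, ← map_mul, hconj, fixedBy_inter_E₇_eq, fixedBy_inter_E₇_eq,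
    Set.ncard_coe_finset, Set.ncard_coe_finset] at key
  simp only [map_mul, reflectionRep_σ] at key
  revert key
  decide

end E₈

/-- Counterexample (c) of the paper: in the Artin–Tits group of type `E₈` (vertices `0,…,7`
standing for `s_1,…,s_8`), the elements `g = σ_1 σ_3 σ_4 σ_5 σ_6` and `h = σ_2 σ_4 σ_5 σ_6 σ_7`
of the standard parabolic subgroup of type `E₇` on `{s_1,…,s_7}` are conjugate in `A_S` but not
in `A_X`; in particular `A_X` is not conjugacy stable in `A_S`. -/
theorem E8_E7_not_conjugacy_stable :
    (∃ c : ArtinGroup E₈,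
        c⁻¹ * (σ E₈ 0 * σ E₈ 2 * σ E₈ 3 * σ E₈ 4 * σ E₈ 5) * c =
          σ E₈ 1 * σ E₈ 3 * σ E₈ 4 * σ E₈ 5 * σ E₈ 6) ∧
    (¬ ∃ c ∈ AP E₈ ({0, 1, 2, 3, 4, 5, 6} : Set (Fin 8)),
        c⁻¹ * (σ E₈ 0 * σ E₈ 2 * σ E₈ 3 * σ E₈ 4 * σ E₈ 5) * c =
          σ E₈ 1 * σ E₈ 3 * σ E₈ 4 * σ E₈ 5 * σ E₈ 6) ∧
    ¬ IsConjugacyStable (AP E₈ ({0, 1, 2, 3, 4, 5, 6} : Set (Fin 8))) := by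
  have mem : ∀ s ∈ ({0, 1, 2, 3, 4, 5, 6} : Set (Fin 8)),
      σ E₈ s ∈ AP E₈ ({0, 1, 2, 3, 4, 5, 6} : Set (Fin 8)) := fun s ↦ σ_mem_AP
  have hg := mul_mem (mul_mem (mul_mem (mul_mem (mem 0 (by simp)) (mem 2 (by simp)))
    (mem 3 (by simp))) (mem 4 (by simp))) (mem 5 (by simp))
  have hh := mul_mem (mul_mem (mul_mem (mul_mem (mem 1 (by simp)) (mem 3 (by simp)))
    (mem 4 (by simp))) (mem 5 (by simp))) (mem 6 (by simp))
  exact ⟨exists_conj_E₈, not_exists_conj_AP_E₇,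
    fun hstab ↦ not_exists_conj_AP_E₇ (hstab _ _ hg hh exists_conj_E₈)⟩

end ArtinTits
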